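/- For every r₁ > 0, the pushforward of the measure μ under the map (l, r, t) ↦ (r₁·l, r₁·r, r₁²·t) equals √r₁ · μ. -/

import Mathlib

open MeasureTheory

/-- The measure `μ` on `(0,∞)³` with density
`(l,r,t) ↦ (3^{−5/8}/(8√(2π))) (l+r)^{1/2} exp(−(l+r)²/(2√3 t)) t^{−5/2}`
with respect to Lebesgue measure. -/
noncomputable def μ : Measure (ℝ × ℝ × ℝ) :=
  (volume.restrict {p : ℝ × ℝ × ℝ | 0 < p.1 ∧ 0 < p.2.1 ∧ 0 < p.2.2}).withDensity
    fun p => ENNReal.ofReal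
      ((3:ℝ) ^ (-(5:ℝ)/8) / (8 * Real.sqrt (2 * Real.pi)) * (p.1 + p.2.1) ^ ((1:ℝ)/2) *
        Real.exp (-(p.1 + p.2.1)^2 / (2 * Real.sqrt 3 * p.2.2)) * p.2.2 ^ (-(5:ℝ)/2))

/-! Under the parabolic scaling `(l, r, t) ↦ (c l, c r, c² t)` Lebesgue measure is multiplied by
`c⁻⁴`, the positive octant is invariant, and the density of `μ` is homogeneous of degree `-9/2`:
`(l + r)² / t` is invariant, `(l + r)^{1/2}` gains `c^{1/2}` and `t^{-5/2}` gains `c⁻⁵`.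
Hence the pushforward of `μ` is `μ` times `c⁻⁴ · c^{9/2} = √c`. -/

open scoped ENNReal
open Set

namespace MeasureTheory.Measure

theorem map_prodMap_eq_smul {α β : Type*} [MeasurableSpace α] [MeasurableSpace β]
    {μ : Measure α} {ν : Measure β} [SFinite μ] [SFinite ν] {f : α → α} {g : β → β}
    {a b : ℝ≥0∞} (hf : Measurable f) (hg : Measurable g)
    (hfμ : μ.map f = a • μ) (hgν : ν.map g = b • ν) :
    (μ.prod ν).map (Prod.map f g) = (a * b) • μ.prod ν := by
  rw [← map_prod_map μ ν hf hg, hfμ, hgν, prod_smul_left, prod_smul_right, smul_smul]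

end MeasureTheory.Measure

theorem MeasurableEquiv.map_withDensity_of_map_eq_smul {α : Type*} [MeasurableSpace α]
    (e : α ≃ᵐ α) {ν : Measure α} {c : ℝ≥0∞} (hν : ν.map e = c • ν) (g : α → ℝ≥0∞) :
    (ν.withDensity g).map e = c • ν.withDensity (g ∘ e.symm) := by
  ext s hs
  rw [Measure.map_apply e.measurable hs, withDensity_apply _ (e.measurable hs),
    Measure.smul_apply, withDensity_apply _ hs, ← lintegral_smul_measure,
    ← Measure.restrict_smul, ← hν, e.restrict_map, lintegral_map_equiv]
  simp

def parabolicScaling (c : ℝ) (p : ℝ × ℝ × ℝ) : ℝ × ℝ × ℝ := (c * p.1, c * p.2.1, c ^ 2 * p.2.2)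

theorem parabolicScaling_eq_prodMap (c : ℝ) :
    parabolicScaling c = Prod.map (c * ·) (Prod.map (c * ·) (c ^ 2 * ·)) := rfl

theorem measurable_parabolicScaling (c : ℝ) : Measurable (parabolicScaling c) := by
  rw [parabolicScaling_eq_prodMap]
  fun_prop

theorem parabolicScaling_inv_parabolicScaling {c : ℝ} (hc : c ≠ 0) (p : ℝ × ℝ × ℝ) :
    parabolicScaling c⁻¹ (parabolicScaling c p) = p := by
  simp [parabolicScaling, hc]

noncomputable def parabolicScalingEquiv {c : ℝ} (hc : c ≠ 0) : (ℝ × ℝ × ℝ) ≃ᵐ (ℝ × ℝ × ℝ) where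
  toFun := parabolicScaling c
  invFun := parabolicScaling c⁻¹
  left_inv := parabolicScaling_inv_parabolicScaling hc
  right_inv p := by simpa using parabolicScaling_inv_parabolicScaling (inv_ne_zero hc) p
  measurable_toFun := measurable_parabolicScaling c
  measurable_invFun := measurable_parabolicScaling c⁻¹

@[simp]
theorem coe_parabolicScalingEquiv {c : ℝ} (hc : c ≠ 0) :
    ⇑(parabolicScalingEquiv hc) = parabolicScaling c :=
  rfl

theorem map_parabolicScaling_volume {c : ℝ} (hc : c ≠ 0) :
    volume.map (parabolicScaling c) = ENNReal.ofReal (c ^ 4)⁻¹ • volume := by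
  have hc2 : c ^ 2 ≠ 0 := pow_ne_zero 2 hc
  rw [parabolicScaling_eq_prodMap, Measure.volume_eq_prod, Measure.volume_eq_prod,
    Measure.map_prodMap_eq_smul (measurable_const_mul c)
      ((measurable_const_mul c).prodMap (measurable_const_mul _)) (Real.map_volume_mul_left hc)
      (Measure.map_prodMap_eq_smul (measurable_const_mul c) (measurable_const_mul _)
        (Real.map_volume_mul_left hc) (Real.map_volume_mul_left hc2)),
    ← ENNReal.ofReal_mul (abs_nonneg _), ← ENNReal.ofReal_mul (abs_nonneg _)]
  have hprod : c⁻¹ * (c⁻¹ * (c ^ 2)⁻¹) = (c ^ 4)⁻¹ := by ring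
  rw [← abs_mul, ← abs_mul, hprod, abs_of_nonneg (by positivity)]

def positiveOctant : Set (ℝ × ℝ × ℝ) := Ioi 0 ×ˢ Ioi 0 ×ˢ Ioi 0

theorem measurableSet_positiveOctant : MeasurableSet positiveOctant :=
  measurableSet_Ioi.prod (measurableSet_Ioi.prod measurableSet_Ioi)

theorem parabolicScaling_preimage_positiveOctant {c : ℝ} (hc : 0 < c) :
    parabolicScaling c ⁻¹' positiveOctant = positiveOctant := by
  ext p
  simp [parabolicScaling, positiveOctant, hc]

noncomputable def μDensity (p : ℝ × ℝ × ℝ) : ℝ :=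
  (3:ℝ) ^ (-(5:ℝ)/8) / (8 * Real.sqrt (2 * Real.pi)) * (p.1 + p.2.1) ^ ((1:ℝ)/2) *
    Real.exp (-(p.1 + p.2.1)^2 / (2 * Real.sqrt 3 * p.2.2)) * p.2.2 ^ (-(5:ℝ)/2)

theorem μ_eq_withDensity :
    μ = (volume.restrict positiveOctant).withDensity fun p => ENNReal.ofReal (μDensity p) :=
  rfl

theorem μDensity_parabolicScaling {c : ℝ} (hc : 0 < c) {p : ℝ × ℝ × ℝ}
    (hsum : 0 ≤ p.1 + p.2.1) (ht : 0 < p.2.2) :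
    μDensity (parabolicScaling c p) = c ^ (-(9:ℝ)/2) * μDensity p := by
  obtain ⟨a, b, t⟩ := p
  have hexp : -(c * a + c * b) ^ 2 / (2 * Real.sqrt 3 * (c ^ 2 * t))
      = -(a + b) ^ 2 / (2 * Real.sqrt 3 * t) := by
    field_simp
  have hsqrt : (c * a + c * b) ^ ((1:ℝ)/2) = c ^ ((1:ℝ)/2) * (a + b) ^ ((1:ℝ)/2) := by
    rw [← mul_add, Real.mul_rpow hc.le hsum]
  have hpow : (c ^ 2 * t) ^ (-(5:ℝ)/2) = c ^ (-(5:ℝ)) * t ^ (-(5:ℝ)/2) := by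
    rw [Real.mul_rpow (by positivity) ht.le, ← Real.rpow_natCast, ← Real.rpow_mul hc.le]
    norm_num
  have hexponent : c ^ (-(9:ℝ)/2) = c ^ ((1:ℝ)/2) * c ^ (-(5:ℝ)) := by
    rw [← Real.rpow_add hc]
    norm_num
  simp only [μDensity, parabolicScaling, hexp, hsqrt, hpow, hexponent]
  ring

theorem stmt_4 (r₁ : ℝ) (hr₁ : 0 < r₁) :
    Measure.map (fun p : ℝ × ℝ × ℝ => (r₁ * p.1, r₁ * p.2.1, r₁^2 * p.2.2)) μ
    = ENNReal.ofReal (Real.sqrt r₁) • μ := by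
  set e := parabolicScalingEquiv hr₁.ne'
  have hvolume : (volume.restrict positiveOctant).map e
      = ENNReal.ofReal (r₁ ^ 4)⁻¹ • volume.restrict positiveOctant := by
    calc (volume.restrict positiveOctant).map e
        = (volume.restrict (e ⁻¹' positiveOctant)).map e := by
          rw [coe_parabolicScalingEquiv, parabolicScaling_preimage_positiveOctant hr₁]
      _ = (volume.map e).restrict positiveOctant := (e.restrict_map _ _).symm
      _ = _ := by
          rw [coe_parabolicScalingEquiv, map_parabolicScaling_volume hr₁.ne',
            Measure.restrict_smul]
  have hdensity : (fun p => ENNReal.ofReal (μDensity (e.symm p)))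
      =ᵐ[volume.restrict positiveOctant]
        ENNReal.ofReal ((r₁⁻¹) ^ (-(9:ℝ)/2)) • fun p => ENNReal.ofReal (μDensity p) := by
    refine (ae_restrict_iff' measurableSet_positiveOctant).2 (.of_forall fun p hp => ?_)
    obtain ⟨ha, hb, ht⟩ : 0 < p.1 ∧ 0 < p.2.1 ∧ 0 < p.2.2 := hp
    rw [Pi.smul_apply, smul_eq_mul, ← ENNReal.ofReal_mul (by positivity)]
    exact congrArg ENNReal.ofReal (μDensity_parabolicScaling (inv_pos.2 hr₁) (by positivity) ht)
  have hconst : (r₁ ^ 4)⁻¹ * (r₁⁻¹) ^ (-(9:ℝ)/2) = Real.sqrt r₁ := by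
    rw [Real.sqrt_eq_rpow, Real.inv_rpow hr₁.le, ← Real.rpow_neg hr₁.le, ← Real.rpow_natCast,
      ← Real.rpow_neg hr₁.le, ← Real.rpow_add hr₁]
    norm_num
  change μ.map e = _
  rw [μ_eq_withDensity, e.map_withDensity_of_map_eq_smul hvolume, Function.comp_def,
    withDensity_congr_ae hdensity, withDensity_smul' _ _ ENNReal.ofReal_ne_top, smul_smul,
    ← ENNReal.ofReal_mul (by positivity), hconst]
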